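/- Hivert's operator π̃_i is idempotent: π̃_i² = π̃_i as linear operators on ℂ[x_1,...,x_n]. -/

import Mathlib

open MvPolynomial

/-- Hivert's quasisymmetric swap on exponent vectors: exchange the exponents in
positions `i` and `i+1` if one of them is zero, otherwise do nothing. -/
noncomputable def tswapE (n i : ℕ) (hi : i + 1 < n) (β : Fin n →₀ ℕ) : Fin n →₀ ℕ :=
  if β ⟨i, by omega⟩ = 0 ∨ β ⟨i + 1, hi⟩ = 0 then
    β.equivMapDomain (Equiv.swap (⟨i, by omega⟩ : Fin n) ⟨i + 1, hi⟩)
  else β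

/-- Hivert's quasisymmetric action `s̃ᵢ` on polynomials, acting monomial-wise by
`s̃ᵢ(x^β) = x^(s̃ᵢ β)` and extended linearly. -/
noncomputable def stilde (n i : ℕ) (hi : i + 1 < n) (f : MvPolynomial (Fin n) ℂ) :
    MvPolynomial (Fin n) ℂ :=
  f.support.sum fun β => monomial (tswapE n i hi β) (coeff β f)

/-- Hivert's operator `π̃ᵢ`, given by its explicit action on monomials:
`π̃ᵢ(x^β) = 0` if `βᵢ₊₁ ≠ 0`, and otherwise
`π̃ᵢ(x^β) = Σ_{j=0}^{βᵢ} x^{(β₁,…,βᵢ−j, j,…,βₙ)}` (transferring `j` units from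
position `i` to position `i+1`); extended linearly. -/
noncomputable def ptildeE (n i : ℕ) (hi : i + 1 < n) (f : MvPolynomial (Fin n) ℂ) :
    MvPolynomial (Fin n) ℂ :=
  f.support.sum fun β =>
    if β ⟨i + 1, hi⟩ = 0 then
      ∑ j ∈ Finset.range (β ⟨i, by omega⟩ + 1),
        monomial (β.update ⟨i, by omega⟩ (β ⟨i, by omega⟩ - j)
          + Finsupp.single (⟨i + 1, hi⟩ : Fin n) j) (coeff β f)
    else 0

/- On a monomial `x^β` with `β_{i+1} = 0`, the `j = 0` term of `π̃ᵢ(x^β)` is `x^β` itself, while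
every other term has a positive exponent at `i+1` and is therefore killed by `π̃ᵢ`. Hence
`π̃ᵢ(π̃ᵢ(x^β)) = π̃ᵢ(x^β)`; if `β_{i+1} ≠ 0` both sides vanish. Additivity of `π̃ᵢ` finishes. -/

section

variable {n i : ℕ} (hi : i + 1 < n)

noncomputable def transferExponent (β : Fin n →₀ ℕ) (j : ℕ) : Fin n →₀ ℕ :=
  β.update ⟨i, by omega⟩ (β ⟨i, by omega⟩ - j) + Finsupp.single (⟨i + 1, hi⟩ : Fin n) j

theorem transferExponent_zero (β : Fin n →₀ ℕ) : transferExponent hi β 0 = β := by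
  simp [transferExponent]

theorem transferExponent_apply_succ (β : Fin n →₀ ℕ) (j : ℕ) :
    transferExponent hi β j ⟨i + 1, hi⟩ = β ⟨i + 1, hi⟩ + j := by
  have hne : (⟨i + 1, hi⟩ : Fin n) ≠ ⟨i, by omega⟩ := by simp [Fin.ext_iff]
  simp [transferExponent, hne]

noncomputable def ptildeMonomial (β : Fin n →₀ ℕ) (c : ℂ) : MvPolynomial (Fin n) ℂ :=
  if β ⟨i + 1, hi⟩ = 0 then
    ∑ j ∈ Finset.range (β ⟨i, by omega⟩ + 1), monomial (transferExponent hi β j) c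
  else 0

theorem ptildeE_eq_sum (f : MvPolynomial (Fin n) ℂ) :
    ptildeE n i hi f = (AddMonoidAlgebra.coeff f).sum (ptildeMonomial hi) := by
  rw [sum_def]; rfl

theorem ptildeMonomial_zero (β : Fin n →₀ ℕ) : ptildeMonomial hi β 0 = 0 := by
  simp [ptildeMonomial]

theorem ptildeMonomial_add (β : Fin n →₀ ℕ) (c₁ c₂ : ℂ) :
    ptildeMonomial hi β (c₁ + c₂) = ptildeMonomial hi β c₁ + ptildeMonomial hi β c₂ := by
  unfold ptildeMonomial
  split_ifs <;> simp [Finset.sum_add_distrib]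

theorem ptildeE_monomial (β : Fin n →₀ ℕ) (c : ℂ) :
    ptildeE n i hi (monomial β c) = ptildeMonomial hi β c := by
  rw [ptildeE_eq_sum, sum_monomial_eq (ptildeMonomial_zero hi β)]

noncomputable def ptildeAddHom : MvPolynomial (Fin n) ℂ →+ MvPolynomial (Fin n) ℂ where
  toFun := ptildeE n i hi
  map_zero' := rfl
  map_add' f g := by
    simp only [ptildeE_eq_sum, AddMonoidAlgebra.coeff_add]
    exact Finsupp.sum_add_index' (ptildeMonomial_zero hi) (ptildeMonomial_add hi)

theorem ptildeAddHom_apply (f : MvPolynomial (Fin n) ℂ) : ptildeAddHom hi f = ptildeE n i hi f :=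
  rfl

theorem ptildeE_add (f g : MvPolynomial (Fin n) ℂ) :
    ptildeE n i hi (f + g) = ptildeE n i hi f + ptildeE n i hi g :=
  map_add (ptildeAddHom hi) f g

theorem ptildeE_monomial_transferExponent (β : Fin n →₀ ℕ) {j : ℕ} (hj : j ≠ 0) (c : ℂ) :
    ptildeE n i hi (monomial (transferExponent hi β j) c) = 0 := by
  rw [ptildeE_monomial, ptildeMonomial, transferExponent_apply_succ, if_neg (by omega)]

theorem ptildeE_ptildeMonomial (β : Fin n →₀ ℕ) (c : ℂ) :
    ptildeE n i hi (ptildeMonomial hi β c) = ptildeMonomial hi β c := by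
  by_cases h : β ⟨i + 1, hi⟩ = 0
  · calc ptildeE n i hi (ptildeMonomial hi β c)
        = ∑ j ∈ Finset.range (β ⟨i, by omega⟩ + 1),
            ptildeE n i hi (monomial (transferExponent hi β j) c) := by
          rw [ptildeMonomial, if_pos h, ← ptildeAddHom_apply, map_sum]
          rfl
      _ = ptildeE n i hi (monomial (transferExponent hi β 0) c) :=
          Finset.sum_eq_single_of_mem 0 (by simp) fun j _ hj =>
            ptildeE_monomial_transferExponent hi β hj c
      _ = ptildeMonomial hi β c := by rw [transferExponent_zero, ptildeE_monomial]
  · rw [ptildeMonomial, if_neg h]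
    exact map_zero (ptildeAddHom hi)

end

/-- Hivert's operator `π̃ᵢ` is idempotent: `π̃ᵢ² = π̃ᵢ` as linear
operators on `ℂ[x₁,…,xₙ]`. -/
theorem ptilde_idempotent (n i : ℕ) (hi : i + 1 < n) (f : MvPolynomial (Fin n) ℂ) :
    ptildeE n i hi (ptildeE n i hi f) = ptildeE n i hi f := by
  induction f using MvPolynomial.induction_on' with
  | monomial β c => rw [ptildeE_monomial, ptildeE_ptildeMonomial]
  | add p q hp hq => rw [ptildeE_add, ptildeE_add, hp, hq]
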